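/- Let B be a closed densely defined operator on a Hilbert space with 0 an isolated point of its spectrum, and let P be the Riesz projection for B at 0 and Q = I - P. If PB = 0 on D(B) (the quasinilpotent part of B at 0 vanishes), then for every z ≠ 0 there exist C ≥ 0 and β₀ such that for all β ≥ β₀, βB - z is boundedly invertible and ‖(βB - z)⁻¹ - P/(-z)‖ ≤ C/β. -/

import Mathlib

/-!
STATEMENT 3: Let `B` be closed and densely defined with `0` an isolated point of its
spectrum, `P` the Riesz projection at `0`, `Q = I - P`.  If the quasinilpotent part of
`B` at `0` vanishes (`PB = 0` on `D(B)`), then for every `z ≠ 0` there are `C ≥ 0` and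
`β₀` such that for `β ≥ β₀`, `βB - z` is boundedly invertible and
`‖(βB - z)⁻¹ - P/(-z)‖ ≤ C/β`.
-/

/-- The operator `β B - z` on the domain of the (unbounded) operator `B`. -/
noncomputable def shiftScale {H : Type*} [NormedAddCommGroup H] [InnerProductSpace ℂ H]
    (B : H →ₗ.[ℂ] H) (β : ℝ) (z : ℂ) : H →ₗ.[ℂ] H where
  domain := B.domain
  toFun := (β : ℂ) • B.toFun - z • B.domain.subtype

def IsBddInverseOn {H : Type*} [NormedAddCommGroup H] [InnerProductSpace ℂ H]
    (T : H →ₗ.[ℂ] H) (R : H →L[ℂ] H) : Prop :=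
  (∀ x : H, ∃ hx : R x ∈ T.domain, T ⟨R x, hx⟩ = x) ∧ ∀ y : T.domain, R (T y) = y

theorem scaled_resolvent_to_riesz_projection {H : Type*} [NormedAddCommGroup H]
    [InnerProductSpace ℂ H] [CompleteSpace H]
    (B : H →ₗ.[ℂ] H) (hBclosed : B.IsClosed) (hdense : Dense (B.domain : Set H))
    -- `0 ∈ σ(B)`:
    (hspec : ¬ ∃ R : H →L[ℂ] H, IsBddInverseOn (shiftScale B 1 0) R)
    -- `0` is isolated in `σ(B)`:
    (hiso : ∃ ε > (0 : ℝ), ∀ w : ℂ, w ≠ 0 → ‖w‖ < ε →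
      ∃ R : H →L[ℂ] H, IsBddInverseOn (shiftScale B 1 w) R)
    -- `P` is the Riesz projection of `B` at `0`: an idempotent commuting with `B`,
    (P : H →L[ℂ] H) (hidem : P ∘L P = P)
    (hPdom : ∀ x : H, P x ∈ B.domain)
    (hcomm : ∀ ψ : B.domain, B ⟨P (ψ : H), hPdom _⟩ = P (B ψ))
    -- whose complement `Q = I - P` carries a bounded inverse of `B` (i.e. `QBQ` is
    -- boundedly invertible on `QH`, expressing `0 ∉ σ(QBQ)`):
    (hQinv : ∃ S : H →L[ℂ] H,
      (∀ x : H, ∃ hx : S x ∈ B.domain, P (S x) = 0 ∧ B ⟨S x, hx⟩ = x - P x) ∧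
      (∀ ψ : B.domain, S (B ψ) = (ψ : H) - P (ψ : H)))
    -- vanishing quasinilpotent part: `P B = 0` on `D(B)`:
    (hquasi : ∀ ψ : B.domain, P (B ψ) = 0) :
    ∀ z : ℂ, z ≠ 0 → ∃ C ≥ (0 : ℝ), ∃ β₀ : ℝ, ∀ β : ℝ, β₀ ≤ β →
      ∃ R : H →L[ℂ] H, IsBddInverseOn (shiftScale B β z) R ∧
        ‖R - (-z)⁻¹ • P‖ ≤ C / β := by
  obtain ⟨S, hS1, hS2⟩ := hQinv
  -- `B (P x) = 0` for all `x`, by density and closedness.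
  have hBP : ∀ x : H, B ⟨P x, hPdom x⟩ = 0 := by
    have hclosedset : IsClosed {y : H | ((P y, (0 : H)) : H × H) ∈ (B.graph : Set (H × H))} :=
      hBclosed.preimage ((P.continuous.prodMk continuous_const))
    have hsub : (B.domain : Set H) ⊆
        {y : H | ((P y, (0 : H)) : H × H) ∈ (B.graph : Set (H × H))} := by
      intro y hy
      have h0 : B ⟨P y, hPdom y⟩ = 0 := by
        rw [hcomm ⟨y, hy⟩]; exact hquasi ⟨y, hy⟩
      have := B.mem_graph ⟨P y, hPdom y⟩
      rwa [h0] at this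
    intro x
    have hx : x ∈ {y : H | ((P y, (0 : H)) : H × H) ∈ (B.graph : Set (H × H))} :=
      closure_minimal hsub hclosedset (hdense x)
    have hx' : ((P x, (0 : H)) : H × H) ∈ B.graph := hx
    rw [LinearPMap.mem_graph_iff] at hx'
    obtain ⟨y, hy1, hy2⟩ := hx'
    have : (⟨P x, hPdom x⟩ : B.domain) = y := Subtype.ext hy1.symm
    rw [this, hy2]
  intro z hz
  refine ⟨2 * ‖S‖ * (1 + ‖P‖), by positivity, max 1 (2 * (‖z‖ * ‖S‖)), ?_⟩
  intro β hβ
  have hβ1 : (1 : ℝ) ≤ β := le_trans (le_max_left _ _) hβ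
  have hβ0 : (0 : ℝ) < β := lt_of_lt_of_le one_pos hβ1
  have hβne : (β : ℂ) ≠ 0 := by
    simpa using Complex.ofReal_ne_zero.mpr (ne_of_gt hβ0)
  set t : H →L[ℂ] H := (z / (β : ℂ)) • S with ht_def
  have htnorm : ‖t‖ ≤ 1 / 2 := by
    have h1 : ‖t‖ = ‖z / (β : ℂ)‖ * ‖S‖ := norm_smul _ _
    have h2 : ‖z / (β : ℂ)‖ = ‖z‖ / β := by
      rw [norm_div, Complex.norm_real, Real.norm_of_nonneg hβ0.le]
    have h3 : 2 * (‖z‖ * ‖S‖) ≤ β := le_trans (le_max_right _ _) hβ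
    rw [h1, h2, div_mul_eq_mul_div, div_le_div_iff₀ hβ0 (by norm_num : (0:ℝ) < 2)]
    linarith
  have ht : ‖t‖ < 1 := lt_of_le_of_lt htnorm (by norm_num)
  set u : (H →L[ℂ] H)ˣ := Units.oneSub t ht with hu_def
  set V : H →L[ℂ] H := (β : ℂ)⁻¹ • (↑u⁻¹ : H →L[ℂ] H) with hV_def
  -- factorization of `β•1 - z•S`
  have hfact : (β : ℂ) • ((1 : H →L[ℂ] H) - t) = (β : ℂ) • (1 : H →L[ℂ] H) - z • S := by
    rw [smul_sub, ht_def, smul_smul, mul_div_cancel₀ _ hβne]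
  have h1 : ((β : ℂ) • (1 : H →L[ℂ] H) - z • S) * V = 1 := by
    rw [← hfact, hV_def]
    have : (β : ℂ) • ((1 : H →L[ℂ] H) - t) * ((β : ℂ)⁻¹ • (↑u⁻¹ : H →L[ℂ] H)) =
        ((β : ℂ) * (β : ℂ)⁻¹) • (((1 : H →L[ℂ] H) - t) * (↑u⁻¹ : H →L[ℂ] H)) := by
      rw [smul_mul_assoc, mul_smul_comm, smul_smul]
    rw [this, mul_inv_cancel₀ hβne, one_smul]
    have h4 : ((1 : H →L[ℂ] H) - t) = (↑u : H →L[ℂ] H) := rfl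
    rw [h4, Units.mul_inv]
  have h2 : V * ((β : ℂ) • (1 : H →L[ℂ] H) - z • S) = 1 := by
    rw [← hfact, hV_def]
    have : ((β : ℂ)⁻¹ • (↑u⁻¹ : H →L[ℂ] H)) * ((β : ℂ) • ((1 : H →L[ℂ] H) - t)) =
        ((β : ℂ)⁻¹ * (β : ℂ)) • ((↑u⁻¹ : H →L[ℂ] H) * ((1 : H →L[ℂ] H) - t)) := by
      rw [smul_mul_assoc, mul_smul_comm, smul_smul]
    rw [this, inv_mul_cancel₀ hβne, one_smul]
    have h4 : ((1 : H →L[ℂ] H) - t) = (↑u : H →L[ℂ] H) := rfl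
    rw [h4, Units.inv_mul]
  have h1' : ∀ y : H, (β : ℂ) • (V y) - z • S (V y) = y := by
    intro y
    have := congrArg (fun T : H →L[ℂ] H => T y) h1
    simpa [ContinuousLinearMap.mul_apply, ContinuousLinearMap.sub_apply,
      ContinuousLinearMap.smul_apply, ContinuousLinearMap.one_apply] using this
  have h2' : ∀ y : H, V ((β : ℂ) • y - z • S y) = y := by
    intro y
    have := congrArg (fun T : H →L[ℂ] H => T y) h2
    simpa [ContinuousLinearMap.mul_apply, ContinuousLinearMap.sub_apply,
      ContinuousLinearMap.smul_apply, ContinuousLinearMap.one_apply] using this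
  set R : H →L[ℂ] H := (-z)⁻¹ • P + S ∘L V ∘L ((1 : H →L[ℂ] H) - P) with hR_def
  have hRx : ∀ x : H, R x = (-z)⁻¹ • P x + S (V (x - P x)) := by
    intro x
    simp [hR_def, ContinuousLinearMap.add_apply, ContinuousLinearMap.smul_apply,
      ContinuousLinearMap.comp_apply, ContinuousLinearMap.sub_apply,
      ContinuousLinearMap.one_apply]
  have hPP : ∀ x : H, P (P x) = P x := fun x => by
    have := congrArg (fun T : H →L[ℂ] H => T x) hidem
    simpa using this
  refine ⟨R, ⟨?_, ?_⟩, ?_⟩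
  · -- right inverse
    intro x
    set w : H := V (x - P x) with hw_def
    obtain ⟨hwdom, hPSw, hBSw⟩ := hS1 w
    have hmem : R x ∈ B.domain := by
      rw [hRx x]
      exact B.domain.add_mem (B.domain.smul_mem _ (hPdom x)) hwdom
    refine ⟨hmem, ?_⟩
    -- compute `B (R x)`
    have hsplit : (⟨R x, hmem⟩ : B.domain) =
        (-z)⁻¹ • (⟨P x, hPdom x⟩ : B.domain) + ⟨S w, hwdom⟩ := by
      apply Subtype.ext
      simp only [Submodule.coe_add, SetLike.val_smul]
      rw [hRx x, ← hw_def]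
    have hBval : B ⟨R x, hmem⟩ = w - P w := by
      rw [hsplit, B.map_add, B.map_smul, hBP x, hBSw]
      simp
    -- `(β•1 - z•S) w = x - P x`
    have hww : (β : ℂ) • w - z • S w = x - P x := h1' (x - P x)
    -- `P w = 0`
    have hPw : P w = 0 := by
      have := congrArg P hww
      rw [map_sub, map_smul, map_smul, hPSw, map_sub, hPP x, smul_zero, sub_zero,
        sub_self] at this
      exact (smul_eq_zero.mp this).resolve_left hβne
    -- evaluate `shiftScale`
    show (β : ℂ) • B ⟨R x, hmem⟩ - z • (R x) = x
    rw [hBval, hPw, sub_zero, hRx x, ← hw_def]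
    have hzP : z • ((-z)⁻¹ • P x) = -(P x) := by
      rw [smul_smul]
      have : z * (-z)⁻¹ = -1 := by field_simp
      rw [this, neg_one_smul]
    calc (β : ℂ) • w - z • ((-z)⁻¹ • P x + S w)
        = ((β : ℂ) • w - z • S w) + P x := by rw [smul_add, hzP]; abel
      _ = (x - P x) + P x := by rw [hww]
      _ = x := by abel
  · -- left inverse
    intro ψ
    show R ((β : ℂ) • B ψ - z • (ψ : H)) = (ψ : H)
    rw [hRx]
    have hPBψ : P (B ψ) = 0 := hquasi ψ
    have hPval : P ((β : ℂ) • B ψ - z • (ψ : H)) = -(z • P (ψ : H)) := by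
      rw [map_sub, map_smul, map_smul, hPBψ, smul_zero, zero_sub]
    have hfirst : (-z)⁻¹ • P ((β : ℂ) • B ψ - z • (ψ : H)) = P (ψ : H) := by
      rw [hPval, smul_neg, smul_smul]
      have : (-z)⁻¹ * z = -1 := by field_simp
      rw [this, neg_one_smul, neg_neg]
    have hsecond : ((β : ℂ) • B ψ - z • (ψ : H)) - P ((β : ℂ) • B ψ - z • (ψ : H)) =
        (β : ℂ) • B ψ - z • S (B ψ) := by
      rw [hPval, hS2 ψ, smul_sub]; abel
    rw [hfirst, hsecond, h2' (B ψ), hS2 ψ]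
    abel
  · -- norm bound
    have hsub : R - (-z)⁻¹ • P = S ∘L V ∘L ((1 : H →L[ℂ] H) - P) := by
      rw [hR_def]; abel
    rw [hsub]
    have hVnorm : ‖V‖ ≤ 2 / β := by
      have hinv : ‖(↑u⁻¹ : H →L[ℂ] H)‖ ≤ 2 := by
        have h5 : (↑u⁻¹ : H →L[ℂ] H) = ∑' n : ℕ, t ^ n := rfl
        rw [h5]
        have := tsum_geometric_le_of_norm_lt_one t ht
        have hone : ‖(1 : H →L[ℂ] H)‖ ≤ 1 := ContinuousLinearMap.norm_id_le
        have hinvle : (1 - ‖t‖)⁻¹ ≤ 2 := by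
          rw [inv_le_comm₀ (by linarith [htnorm, norm_nonneg t] : (0:ℝ) < 1 - ‖t‖) (by norm_num)]
          linarith
        linarith
      have : ‖V‖ = ‖(β : ℂ)⁻¹‖ * ‖(↑u⁻¹ : H →L[ℂ] H)‖ := norm_smul _ _
      rw [this]
      have hb : ‖(β : ℂ)⁻¹‖ = β⁻¹ := by
        rw [norm_inv, Complex.norm_real, Real.norm_of_nonneg hβ0.le]
      rw [hb, div_eq_inv_mul, mul_comm (β⁻¹) 2]
      exact mul_le_mul_of_nonneg_left hinv (inv_nonneg.mpr hβ0.le) |>.trans_eq (mul_comm _ _)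
    have hQn : ‖(1 : H →L[ℂ] H) - P‖ ≤ 1 + ‖P‖ := by
      refine le_trans (norm_sub_le _ _) ?_
      have hone : ‖(1 : H →L[ℂ] H)‖ ≤ 1 := ContinuousLinearMap.norm_id_le
      linarith
    calc ‖S ∘L V ∘L ((1 : H →L[ℂ] H) - P)‖
        ≤ ‖S‖ * ‖V ∘L ((1 : H →L[ℂ] H) - P)‖ := ContinuousLinearMap.opNorm_comp_le _ _
      _ ≤ ‖S‖ * (‖V‖ * ‖(1 : H →L[ℂ] H) - P‖) := by
          exact mul_le_mul_of_nonneg_left (ContinuousLinearMap.opNorm_comp_le _ _)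
            (norm_nonneg _)
      _ ≤ ‖S‖ * ((2 / β) * (1 + ‖P‖)) := by
          apply mul_le_mul_of_nonneg_left _ (norm_nonneg _)
          apply mul_le_mul hVnorm hQn (norm_nonneg _)
          positivity
      _ = 2 * ‖S‖ * (1 + ‖P‖) / β := by
          field_simp
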